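/- Let Ψ : ℝ³ → ℂ be of class C², write u = (Re Ψ, Im Ψ) : ℝ³ → ℝ², and set p = u_x, r = u_y, Z = (u, p, r) : ℝ³ → ℝ⁶. Let M, J, K be the 6×6 block matrices M = diag(I₂, 0, 0), J = [[0, −I₂, 0],[I₂, 0, 0],[0, 0, 0]], K = [[0, 0, −I₂],[0, 0, 0],[I₂, 0, 0]], and let S(u,p,r) = ½‖u‖² + ½‖p‖² + ½‖r‖² − ¼‖u‖⁴. Then Ψ satisfies the real Ginzburg–Landau equation Ψ_t = Ψ_xx + Ψ_yy + Ψ − |Ψ|²Ψ at every point if and only if Z satisfies the multisymplectic system M·Z_t + J·Z_x + K·Z_y = ∇S(Z) at every point. -/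

import Mathlib

open Matrix

/-- The matrix `M = diag(I₂, 0, 0)` of the multisymplectic formulation. -/
noncomputable def glM : Matrix (Fin 6) (Fin 6) ℝ :=
  !![1,0,0,0,0,0;
     0,1,0,0,0,0;
     0,0,0,0,0,0;
     0,0,0,0,0,0;
     0,0,0,0,0,0;
     0,0,0,0,0,0]

/-- The matrix `J = [[0, −I₂, 0],[I₂, 0, 0],[0, 0, 0]]`. -/
noncomputable def glJ : Matrix (Fin 6) (Fin 6) ℝ :=
  !![0,0,-1,0,0,0;
     0,0,0,-1,0,0;
     1,0,0,0,0,0;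
     0,1,0,0,0,0;
     0,0,0,0,0,0;
     0,0,0,0,0,0]

/-- The matrix `K = [[0, 0, −I₂],[0, 0, 0],[I₂, 0, 0]]`. -/
noncomputable def glK : Matrix (Fin 6) (Fin 6) ℝ :=
  !![0,0,0,0,-1,0;
     0,0,0,0,0,-1;
     0,0,0,0,0,0;
     0,0,0,0,0,0;
     1,0,0,0,0,0;
     0,1,0,0,0,0]

/-- `S(u,p,r) = ½‖u‖² + ½‖p‖² + ½‖r‖² − ¼‖u‖⁴` on `ℝ⁶ = (u,p,r)`. -/
noncomputable def glS : EuclideanSpace ℝ (Fin 6) → ℝ := fun Z =>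
  (1/2) * (Z 0 ^ 2 + Z 1 ^ 2) + (1/2) * (Z 2 ^ 2 + Z 3 ^ 2)
    + (1/2) * (Z 4 ^ 2 + Z 5 ^ 2) - (1/4) * (Z 0 ^ 2 + Z 1 ^ 2) ^ 2

/-- `Z = (u, p, r)` with `u = (Re Ψ, Im Ψ)`, `p = u_x`, `r = u_y`. -/
noncomputable def glZ (Ψ : ℝ → ℝ → ℝ → ℂ) (x y t : ℝ) : EuclideanSpace ℝ (Fin 6) :=
  (WithLp.equiv 2 (Fin 6 → ℝ)).symm
    ![(Ψ x y t).re, (Ψ x y t).im,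
      deriv (fun x' => (Ψ x' y t).re) x, deriv (fun x' => (Ψ x' y t).im) x,
      deriv (fun y' => (Ψ x y' t).re) y, deriv (fun y' => (Ψ x y' t).im) y]

/-!
Rows 3–6 of the multisymplectic system say `u_x = p` and `u_y = r`, which hold by the very
definition of `Z`. Rows 1–2 say `u_t − p_x − r_y = u − ‖u‖² u`; since `p_x = u_xx` and
`r_y = u_yy`, these are the real and imaginary parts of the Ginzburg–Landau equation. The only
analysis needed is that, for `Ψ` of class `C²`, all the partial derivatives involved exist, so
that they commute with taking coordinates, real and imaginary parts.
-/

theorem ContinuousLinearMap.deriv_comp {E F : Type*} [NormedAddCommGroup E] [NormedSpace ℝ E]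
    [NormedAddCommGroup F] [NormedSpace ℝ F] (L : E →L[ℝ] F) {f : ℝ → E} {s : ℝ}
    (hf : DifferentiableAt ℝ f s) : deriv (fun s => L (f s)) s = L (deriv f s) :=
  (L.hasFDerivAt.comp_hasDerivAt s hf.hasDerivAt).deriv

theorem Complex.deriv_re {f : ℝ → ℂ} {s : ℝ} (hf : DifferentiableAt ℝ f s) :
    deriv (fun s => (f s).re) s = (deriv f s).re :=
  reCLM.deriv_comp hf

theorem Complex.deriv_im {f : ℝ → ℂ} {s : ℝ} (hf : DifferentiableAt ℝ f s) :
    deriv (fun s => (f s).im) s = (deriv f s).im :=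
  imCLM.deriv_comp hf

theorem EuclideanSpace.deriv_apply {ι : Type*} [Fintype ι] {f : ℝ → EuclideanSpace ℝ ι}
    {s : ℝ} (hf : DifferentiableAt ℝ f s) (i : ι) : deriv f s i = deriv (fun s => f s i) s :=
  ((proj i).deriv_comp hf).symm

section Slices

variable {E : Type*} [NormedAddCommGroup E] [NormedSpace ℝ E] {g : ℝ → ℝ → ℝ → E}
  {x y t : ℝ}

theorem hasDerivAt_slice₁
    (hg : DifferentiableAt ℝ (fun p : ℝ × ℝ × ℝ => g p.1 p.2.1 p.2.2) (x, y, t)) :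
    HasDerivAt (fun x' => g x' y t)
      (fderiv ℝ (fun p : ℝ × ℝ × ℝ => g p.1 p.2.1 p.2.2) (x, y, t) (1, 0, 0)) x := by
  have h : HasDerivAt (fun x' : ℝ => (x', y, t)) (1, 0, 0) x :=
    (hasDerivAt_id' x).prodMk ((hasDerivAt_const x y).prodMk (hasDerivAt_const x t))
  exact hg.hasFDerivAt.comp_hasDerivAt x h

theorem hasDerivAt_slice₂
    (hg : DifferentiableAt ℝ (fun p : ℝ × ℝ × ℝ => g p.1 p.2.1 p.2.2) (x, y, t)) :
    HasDerivAt (fun y' => g x y' t)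
      (fderiv ℝ (fun p : ℝ × ℝ × ℝ => g p.1 p.2.1 p.2.2) (x, y, t) (0, 1, 0)) y := by
  have h : HasDerivAt (fun y' : ℝ => (x, y', t)) (0, 1, 0) y :=
    (hasDerivAt_const y x).prodMk ((hasDerivAt_id' y).prodMk (hasDerivAt_const y t))
  exact hg.hasFDerivAt.comp_hasDerivAt y h

theorem hasDerivAt_slice₃
    (hg : DifferentiableAt ℝ (fun p : ℝ × ℝ × ℝ => g p.1 p.2.1 p.2.2) (x, y, t)) :
    HasDerivAt (fun t' => g x y t')
      (fderiv ℝ (fun p : ℝ × ℝ × ℝ => g p.1 p.2.1 p.2.2) (x, y, t) (0, 0, 1)) t := by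
  have h : HasDerivAt (fun t' : ℝ => (x, y, t')) (0, 0, 1) t :=
    (hasDerivAt_const t x).prodMk ((hasDerivAt_const t y).prodMk (hasDerivAt_id' t))
  exact hg.hasFDerivAt.comp_hasDerivAt t h

theorem differentiableAt_slice₁
    (hg : Differentiable ℝ (fun p : ℝ × ℝ × ℝ => g p.1 p.2.1 p.2.2)) :
    DifferentiableAt ℝ (fun x' => g x' y t) x :=
  (hasDerivAt_slice₁ (hg _)).differentiableAt

theorem differentiableAt_slice₂
    (hg : Differentiable ℝ (fun p : ℝ × ℝ × ℝ => g p.1 p.2.1 p.2.2)) :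
    DifferentiableAt ℝ (fun y' => g x y' t) y :=
  (hasDerivAt_slice₂ (hg _)).differentiableAt

theorem differentiableAt_slice₃
    (hg : Differentiable ℝ (fun p : ℝ × ℝ × ℝ => g p.1 p.2.1 p.2.2)) :
    DifferentiableAt ℝ (fun t' => g x y t') t :=
  (hasDerivAt_slice₃ (hg _)).differentiableAt

theorem ContDiff.deriv_slice₁ {m n : WithTop ℕ∞}
    (hg : ContDiff ℝ n (fun p : ℝ × ℝ × ℝ => g p.1 p.2.1 p.2.2)) (hmn : m + 1 ≤ n) :
    ContDiff ℝ m (fun p : ℝ × ℝ × ℝ => deriv (fun x' => g x' p.2.1 p.2.2) p.1) := by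
  have hd := hg.differentiable ((lt_of_lt_of_le (by simp) hmn).ne')
  have h : (fun p : ℝ × ℝ × ℝ => deriv (fun x' => g x' p.2.1 p.2.2) p.1) =
      fun p => fderiv ℝ (fun p : ℝ × ℝ × ℝ => g p.1 p.2.1 p.2.2) p (1, 0, 0) :=
    funext fun p => (hasDerivAt_slice₁ (hd p)).deriv
  rw [h]
  exact (hg.fderiv_right hmn).clm_apply contDiff_const

theorem ContDiff.deriv_slice₂ {m n : WithTop ℕ∞}
    (hg : ContDiff ℝ n (fun p : ℝ × ℝ × ℝ => g p.1 p.2.1 p.2.2)) (hmn : m + 1 ≤ n) :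
    ContDiff ℝ m (fun p : ℝ × ℝ × ℝ => deriv (fun y' => g p.1 y' p.2.2) p.2.1) := by
  have hd := hg.differentiable ((lt_of_lt_of_le (by simp) hmn).ne')
  have h : (fun p : ℝ × ℝ × ℝ => deriv (fun y' => g p.1 y' p.2.2) p.2.1) =
      fun p => fderiv ℝ (fun p : ℝ × ℝ × ℝ => g p.1 p.2.1 p.2.2) p (0, 1, 0) :=
    funext fun p => (hasDerivAt_slice₂ (hd p)).deriv
  rw [h]
  exact (hg.fderiv_right hmn).clm_apply contDiff_const

theorem ContDiff.differentiableAt_deriv_slice₁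
    (hg : ContDiff ℝ 2 (fun p : ℝ × ℝ × ℝ => g p.1 p.2.1 p.2.2)) :
    DifferentiableAt ℝ (fun x' => deriv (fun x'' => g x'' y t) x') x :=
  differentiableAt_slice₁ (g := fun x y t => deriv (fun x'' => g x'' y t) x)
    ((hg.deriv_slice₁ (m := 1) (by norm_num)).differentiable one_ne_zero)

theorem ContDiff.differentiableAt_deriv_slice₂
    (hg : ContDiff ℝ 2 (fun p : ℝ × ℝ × ℝ => g p.1 p.2.1 p.2.2)) :
    DifferentiableAt ℝ (fun y' => deriv (fun y'' => g x y'' t) y') y :=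
  differentiableAt_slice₂ (g := fun x y t => deriv (fun y'' => g x y'' t) y)
    ((hg.deriv_slice₂ (m := 1) (by norm_num)).differentiable one_ne_zero)

end Slices

theorem hasGradientAt_glS (Z : EuclideanSpace ℝ (Fin 6)) :
    HasGradientAt glS (WithLp.toLp 2 ![Z 0 - (Z 0 ^ 2 + Z 1 ^ 2) * Z 0,
      Z 1 - (Z 0 ^ 2 + Z 1 ^ 2) * Z 1, Z 2, Z 3, Z 4, Z 5]) Z := by
  have h := fun i : Fin 6 => (EuclideanSpace.proj (𝕜 := ℝ) i).hasFDerivAt (x := Z)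
  have hu := ((h 0).pow 2).add ((h 1).pow 2)
  have hS := (((hu.const_mul (1/2 : ℝ)).add
    ((((h 2).pow 2).add ((h 3).pow 2)).const_mul (1/2 : ℝ))).add
    ((((h 4).pow 2).add ((h 5).pow 2)).const_mul (1/2 : ℝ))).sub
    ((hu.pow 2).const_mul (1/4 : ℝ))
  rw [hasGradientAt_iff_hasFDerivAt]
  refine hS.congr_fderiv ?_
  ext v
  simp [Fin.sum_univ_six, PiLp.inner_apply]
  ring

theorem toEuclideanLin_add_eq_gradient_glS_iff (a b c Z : EuclideanSpace ℝ (Fin 6)) :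
    toEuclideanLin glM a + toEuclideanLin glJ b + toEuclideanLin glK c = gradient glS Z ↔
      (a 0 - b 2 - c 4 = Z 0 - (Z 0 ^ 2 + Z 1 ^ 2) * Z 0 ∧
        a 1 - b 3 - c 5 = Z 1 - (Z 0 ^ 2 + Z 1 ^ 2) * Z 1) ∧
      (b 0 = Z 2 ∧ b 1 = Z 3 ∧ c 0 = Z 4 ∧ c 1 = Z 5) := by
  rw [(hasGradientAt_glS Z).gradient, PiLp.ext_iff]
  simp [Fin.forall_fin_succ, glM, glJ, glK, toLpLin_apply, dotProduct, Fin.sum_univ_six,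
    ← sub_eq_add_neg, and_assoc]

theorem eq_ginzburgLandau_iff (a b c z : ℂ) :
    a = b + c + z - (‖z‖ : ℂ) ^ 2 * z ↔
      a.re - b.re - c.re = z.re - (z.re ^ 2 + z.im ^ 2) * z.re ∧
        a.im - b.im - c.im = z.im - (z.re ^ 2 + z.im ^ 2) * z.im := by
  have hz : (‖z‖ : ℂ) ^ 2 = ((z.re ^ 2 + z.im ^ 2 : ℝ) : ℂ) := by
    rw [← Complex.ofReal_pow, Complex.sq_norm, Complex.normSq_apply]; ring_nf
  rw [Complex.ext_iff, hz]
  simp only [Complex.add_re, Complex.add_im, Complex.sub_re, Complex.sub_im,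
    Complex.re_ofReal_mul, Complex.im_ofReal_mul]
  constructor <;> rintro ⟨h₁, h₂⟩ <;> constructor <;> linarith

theorem differentiable_glZ {Ψ : ℝ → ℝ → ℝ → ℂ}
    (hΨ : ContDiff ℝ 2 (fun p : ℝ × ℝ × ℝ => Ψ p.1 p.2.1 p.2.2)) :
    Differentiable ℝ (fun p : ℝ × ℝ × ℝ => glZ Ψ p.1 p.2.1 p.2.2) := by
  have hre : ContDiff ℝ 2 (fun p : ℝ × ℝ × ℝ => (Ψ p.1 p.2.1 p.2.2).re) :=
    Complex.reCLM.contDiff.comp hΨ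
  have him : ContDiff ℝ 2 (fun p : ℝ × ℝ × ℝ => (Ψ p.1 p.2.1 p.2.2).im) :=
    Complex.imCLM.contDiff.comp hΨ
  rw [differentiable_piLp]
  intro i
  fin_cases i
  · exact hre.differentiable two_ne_zero
  · exact him.differentiable two_ne_zero
  · exact (ContDiff.deriv_slice₁ (g := fun x y t => (Ψ x y t).re) (m := 1) hre
      (by norm_num)).differentiable one_ne_zero
  · exact (ContDiff.deriv_slice₁ (g := fun x y t => (Ψ x y t).im) (m := 1) him
      (by norm_num)).differentiable one_ne_zero
  · exact (ContDiff.deriv_slice₂ (g := fun x y t => (Ψ x y t).re) (m := 1) hre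
      (by norm_num)).differentiable one_ne_zero
  · exact (ContDiff.deriv_slice₂ (g := fun x y t => (Ψ x y t).im) (m := 1) him
      (by norm_num)).differentiable one_ne_zero

theorem stmt17 (Ψ : ℝ → ℝ → ℝ → ℂ)
    (hΨ : ContDiff ℝ 2 (fun p : ℝ × ℝ × ℝ => Ψ p.1 p.2.1 p.2.2)) :
    (∀ x y t : ℝ,
        deriv (fun t' => Ψ x y t') t =
          deriv (fun x' => deriv (fun x'' => Ψ x'' y t) x') x
          + deriv (fun y' => deriv (fun y'' => Ψ x y'' t) y') y
          + Ψ x y t - (‖Ψ x y t‖ : ℂ) ^ 2 * Ψ x y t) ↔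
    (∀ x y t : ℝ,
        Matrix.toEuclideanLin glM (deriv (fun t' => glZ Ψ x y t') t)
          + Matrix.toEuclideanLin glJ (deriv (fun x' => glZ Ψ x' y t) x)
          + Matrix.toEuclideanLin glK (deriv (fun y' => glZ Ψ x y' t) y)
          = gradient glS (glZ Ψ x y t)) := by
  have hΨd : Differentiable ℝ (fun p : ℝ × ℝ × ℝ => Ψ p.1 p.2.1 p.2.2) :=
    hΨ.differentiable two_ne_zero
  have hΨt : ∀ x y t, DifferentiableAt ℝ (fun t' => Ψ x y t') t :=
    fun _ _ _ => differentiableAt_slice₃ hΨd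
  have hΨx : ∀ x y t, DifferentiableAt ℝ (fun x' => Ψ x' y t) x :=
    fun _ _ _ => differentiableAt_slice₁ hΨd
  have hΨy : ∀ x y t, DifferentiableAt ℝ (fun y' => Ψ x y' t) y :=
    fun _ _ _ => differentiableAt_slice₂ hΨd
  have hΨxx : ∀ x y t, DifferentiableAt ℝ (fun x' => deriv (fun x'' => Ψ x'' y t) x') x :=
    fun _ _ _ => hΨ.differentiableAt_deriv_slice₁
  have hΨyy : ∀ x y t, DifferentiableAt ℝ (fun y' => deriv (fun y'' => Ψ x y'' t) y') y :=
    fun _ _ _ => hΨ.differentiableAt_deriv_slice₂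
  have hZ := differentiable_glZ hΨ
  refine forall₃_congr fun x y t => ?_
  rw [toEuclideanLin_add_eq_gradient_glS_iff, eq_ginzburgLandau_iff]
  simp only [EuclideanSpace.deriv_apply (differentiableAt_slice₁ hZ),
    EuclideanSpace.deriv_apply (differentiableAt_slice₂ hZ),
    EuclideanSpace.deriv_apply (differentiableAt_slice₃ hZ)]
  -- unfolding `glZ` turns the rows `u_x = p`, `u_y = r` into trivial equalities
  simp only [glZ, WithLp.equiv_symm_apply, cons_val_zero, cons_val, cons_val_one, and_self,
    and_true]
  simp only [Complex.deriv_re, Complex.deriv_im, hΨt, hΨx, hΨy, hΨxx, hΨyy]
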